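/- arXiv:math/9912145 — 4 statements merged into one kernel-verified Lean document; each statement's English description precedes it below -/
import Mathlib

section
/- On the level set f⁻¹{ε₂} ⊂ ℝ⁴ (for f = −r₁²+r₂², ε₂ > 0) with coordinates (r = r₁, μ = θ₁, λ = θ₂), the 1-form α₂ = ½[(r²−1) dμ + (r²+ε₂) dλ] has the same kernel on {r > 0} as dλ + ((r²−1)/(r²+ε₂)) dμ, and any 1-form α₂' = dλ + t(r²) dμ with t smooth, t(0)=0, t' > 0, and t(s) = (s−1)/(s+ε₂) for s ≥ 1+δ satisfies: (a) α₂' is a positive contact form on the whole solid torus including {r=0}; (b) ker α₂' = ker α₂ on {r² ≥ 1+δ}; (c) α₂' ∧ (r dr ∧ dμ) = (1 − t(r²)) r dr ∧ dμ ∧ dλ > 0 wherever t(r²) < 1. -/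
noncomputable section

/-- ℝ³, the local model of a 3-manifold. -/
abbrev E3 : Type := Fin 3 → ℝ

/-- Pairing of a covector (given by its coefficients) with a vector. -/
def dot3 (a v : E3) : ℝ := ∑ i, a i * v i

/-- The exterior derivative of a 1-form `a` (given by coefficient functions),
evaluated on a pair of (constant) vectors: dα(u,v) = ∂_u(α(v)) − ∂_v(α(u)). -/
noncomputable def oneD (a : E3 → E3) (x u v : E3) : ℝ :=
  fderiv ℝ (fun y => dot3 (a y) v) x u - fderiv ℝ (fun y => dot3 (a y) u) x v

/-- Standard basis vectors. -/
def e3 (i : Fin 3) : E3 := Pi.single i 1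

/-- The coefficient of α ∧ dα against the standard volume dx⁰∧dx¹∧dx²;
a 1-form is positive contact iff this is everywhere positive. -/
noncomputable def contactVol (a : E3 → E3) (x : E3) : ℝ :=
  dot3 (a x) (e3 0) * oneD a x (e3 1) (e3 2)
    - dot3 (a x) (e3 1) * oneD a x (e3 0) (e3 2)
    + dot3 (a x) (e3 2) * oneD a x (e3 0) (e3 1)

/-- s = r² = x² + y². -/
def sq2 (x : E3) : ℝ := (x 0) ^ 2 + (x 1) ^ 2

/-- α₂' = dλ + t(r²) dμ in Cartesian coordinates (x,y,λ). -/
def alphaT (t : ℝ → ℝ) (x : E3) : E3 :=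
  ![-(x 1) * t (sq2 x) / sq2 x, x 0 * t (sq2 x) / sq2 x, 1]

/-- α₂ = ½[(r²−1) dμ + (r²+ε₂) dλ] in Cartesian coordinates. -/
def alpha2 (ε : ℝ) (x : E3) : E3 :=
  ![-(x 1) * (sq2 x - 1) / (2 * sq2 x), x 0 * (sq2 x - 1) / (2 * sq2 x), (sq2 x + ε) / 2]

/-- dλ + ((r²−1)/(r²+ε₂)) dμ in Cartesian coordinates. -/
def alphaN (ε : ℝ) (x : E3) : E3 :=
  ![-(x 1) * ((sq2 x - 1) / (sq2 x + ε)) / sq2 x, x 0 * ((sq2 x - 1) / (sq2 x + ε)) / sq2 x, 1]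

/-- The 2-form ω₀|_{f⁻¹{ε₂}} = r dr∧(dμ+dλ) = dx∧dy + x dx∧dλ + y dy∧dλ in
Cartesian coordinates. -/
def omRes (x u v : E3) : ℝ :=
  (u 0 * v 1 - u 1 * v 0) + x 0 * (u 0 * v 2 - u 2 * v 0) + x 1 * (u 1 * v 2 - u 2 * v 1)

/-- The 3-form α ∧ ω evaluated on the standard basis. -/
noncomputable def wedge12 (a : E3 → E3) (ω : E3 → E3 → E3 → ℝ) (x : E3) : ℝ :=
  dot3 (a x) (e3 0) * ω x (e3 1) (e3 2)
    - dot3 (a x) (e3 1) * ω x (e3 0) (e3 2)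
    + dot3 (a x) (e3 2) * ω x (e3 0) (e3 1)

-- ======= auxiliary lemmas =======

local notation "P" i => (ContinuousLinearMap.proj (R := ℝ) (φ := fun _ : Fin 3 => ℝ) i)

noncomputable def Sx (x : E3) : E3 →L[ℝ] ℝ := (2 * x 0) • (P 0) + (2 * x 1) • (P 1)

lemma dot3_e3 (w : E3) (j : Fin 3) : dot3 w (e3 j) = w j := by
  simp [dot3, e3, Fin.sum_univ_three]
  fin_cases j <;> simp [Pi.single_apply]

lemma e3_apply (i j : Fin 3) : e3 i j = if j = i then 1 else 0 := by
  simp [e3, Pi.single_apply]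

lemma cont_sq2 : Continuous sq2 := by unfold sq2; fun_prop

lemma hproj (x : E3) (i : Fin 3) : HasFDerivAt (fun y : E3 => y i) (P i) x := by
  exact (ContinuousLinearMap.proj (R := ℝ) (φ := fun _ : Fin 3 => ℝ) i).hasFDerivAt (x := x)

lemma hsq2 (x : E3) : HasFDerivAt sq2 (Sx x) x := by
  have := ((hproj x 0).mul (hproj x 0)).add ((hproj x 1).mul (hproj x 1))
  exact (this.congr_fderiv (by ext v; simp [Sx, ContinuousLinearMap.proj]; ring)).congr_of_eventuallyEq
    (Filter.Eventually.of_forall fun y => by simp [sq2]; ring)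

lemma hasF_pos (t : ℝ → ℝ) (ht : ContDiff ℝ (⊤ : ℕ∞) t) (x : E3) (hs : sq2 x ≠ 0) (i : Fin 3) :
    HasFDerivAt (fun y : E3 => y i * t (sq2 y) / sq2 y)
      ((x i * t (sq2 x)) • ((-(sq2 x ^ 2)⁻¹) • Sx x)
        + (sq2 x)⁻¹ • ((x i) • ((deriv t (sq2 x)) • Sx x) + (t (sq2 x)) • (P i))) x := by
  have htd : HasDerivAt t (deriv t (sq2 x)) (sq2 x) :=
    ((ht.differentiable (by simp)) (sq2 x)).hasDerivAt
  have hts : HasFDerivAt (fun y => t (sq2 y)) ((deriv t (sq2 x)) • Sx x) x :=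
    htd.comp_hasFDerivAt x (hsq2 x)
  have hnum := (hproj x i).fun_mul hts
  have hinv : HasFDerivAt (fun y : E3 => (sq2 y)⁻¹) ((-(sq2 x ^ 2)⁻¹) • Sx x) x :=
    (hasDerivAt_inv hs).comp_hasFDerivAt x (hsq2 x)
  have := hnum.fun_mul hinv
  simpa only [div_eq_mul_inv] using this

lemma sq2_zero (x : E3) (hx : sq2 x = 0) : x 0 = 0 ∧ x 1 = 0 := by
  have h : (x 0)^2 + (x 1)^2 = 0 := hx
  have h0 : (x 0)^2 = 0 := by nlinarith [sq_nonneg (x 0), sq_nonneg (x 1)]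
  have h1 : (x 1)^2 = 0 := by nlinarith [sq_nonneg (x 0), sq_nonneg (x 1)]
  exact ⟨pow_eq_zero_iff (by norm_num) |>.mp h0, pow_eq_zero_iff (by norm_num) |>.mp h1⟩

lemma hasF_zero (t : ℝ → ℝ) (ht : ContDiff ℝ (⊤ : ℕ∞) t) (ht0 : t 0 = 0)
    (x : E3) (hx : sq2 x = 0) (i : Fin 3) (hi : i = 0 ∨ i = 1) :
    HasFDerivAt (fun y : E3 => y i * t (sq2 y) / sq2 y) ((deriv t 0) • (P i)) x := by
  have hx0 := (sq2_zero x hx).1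
  have hx1 := (sq2_zero x hx).2
  have hxi : x i = 0 := by rcases hi with h | h <;> simp [h, hx0, hx1]
  rw [hasFDerivAt_iff_isLittleO_nhds_zero, Asymptotics.isLittleO_iff]
  intro c hc
  have htd : HasDerivAt t (deriv t 0) 0 := ((ht.differentiable (by simp)) 0).hasDerivAt
  have hlo := hasDerivAt_iff_isLittleO.mp htd
  rw [Asymptotics.isLittleO_iff] at hlo
  have hev := hlo hc
  have htends : Filter.Tendsto (fun h : E3 => sq2 (x + h)) (nhds 0) (nhds 0) := by
    have h1 : Filter.Tendsto (fun h : E3 => x + h) (nhds 0) (nhds x) := by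
      simpa using (continuous_add_left x).tendsto (0 : E3)
    have := (cont_sq2.tendsto x).comp h1
    rwa [hx] at this
  filter_upwards [htends.eventually hev] with h hy
  simp only [ht0, sub_zero, smul_eq_mul] at hy
  have hxh : (x + h) i = h i := by simp [hxi]
  have hfx : x i * t (sq2 x) / sq2 x = 0 := by rw [hxi]; simp
  have happ : ((deriv t 0) • (ContinuousLinearMap.proj (R := ℝ)
      (φ := fun _ : Fin 3 => ℝ) i)) h = deriv t 0 * h i := by simp
  rw [hfx, happ, hxh]
  have hhi : |h i| ≤ ‖h‖ := by
    have := norm_le_pi_norm h i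
    simpa [Real.norm_eq_abs] using this
  set s := sq2 (x + h) with hsdef
  by_cases hs : s = 0
  · have h0 := (sq2_zero (x + h) hs).1
    have h1 := (sq2_zero (x + h) hs).2
    have hzero : h i = 0 := by
      rcases hi with hh | hh <;> rw [hh] <;> [skip; skip] <;>
        simp_all [Pi.add_apply]
    rw [hzero]
    simp only [hs, mul_zero, zero_mul, div_zero, sub_zero, zero_sub, mul_comm]
    simp
    positivity
  · have key : h i * t s / s - 0 - deriv t 0 * h i
        = h i * ((t s - (s - 0) * deriv t 0) / s) := by
      field_simp; ring
    rw [key]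
    have h1 : ‖h i * ((t s - (s - 0) * deriv t 0) / s)‖
        = |h i| * (‖t s - (s - 0) * deriv t 0‖ / ‖s‖) := by
      simp [Real.norm_eq_abs, abs_mul, abs_div]
    rw [h1]
    have h2 : ‖t s - (s - 0) * deriv t 0‖ / ‖s‖ ≤ c := by
      rw [div_le_iff₀ (by simpa using norm_pos_iff.mpr hs : (0:ℝ) < ‖s‖)]
      simpa using hy
    calc |h i| * (‖t s - (s - 0) * deriv t 0‖ / ‖s‖)
        ≤ |h i| * c := mul_le_mul_of_nonneg_left h2 (abs_nonneg _)
      _ ≤ ‖h‖ * c := mul_le_mul_of_nonneg_right hhi hc.le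
      _ = c * ‖h‖ := mul_comm _ _

lemma alphaT0 (t : ℝ → ℝ) : (fun y => dot3 (alphaT t y) (e3 0))
    = fun y : E3 => -(y 1 * t (sq2 y) / sq2 y) := by
  funext y; rw [dot3_e3]; simp [alphaT]; ring

lemma alphaT1 (t : ℝ → ℝ) : (fun y => dot3 (alphaT t y) (e3 1))
    = fun y : E3 => y 0 * t (sq2 y) / sq2 y := by
  funext y; rw [dot3_e3]; simp [alphaT]

lemma alphaT2 (t : ℝ → ℝ) : (fun y => dot3 (alphaT t y) (e3 2))
    = fun _ : E3 => (1:ℝ) := by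
  funext y; rw [dot3_e3]; simp [alphaT]

lemma contactVol_eq (t : ℝ → ℝ) (ht : ContDiff ℝ (⊤ : ℕ∞) t) (ht0 : t 0 = 0) (x : E3) :
    contactVol (alphaT t) x = 2 * deriv t (sq2 x) := by
  by_cases hs : sq2 x = 0
  · have h1 := hasF_zero t ht ht0 x hs 0 (Or.inl rfl)
    have h0 : HasFDerivAt (fun y : E3 => -(y 1 * t (sq2 y) / sq2 y))
        (-((deriv t 0) • (P (1 : Fin 3)))) x :=
      (hasF_zero t ht ht0 x hs 1 (Or.inr rfl)).neg
    have hx0 := (sq2_zero x hs).1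
    have hx1 := (sq2_zero x hs).2
    rw [contactVol, oneD, oneD, oneD, alphaT0, alphaT1, alphaT2,
      h1.fderiv, h0.fderiv, fderiv_fun_const]
    rw [dot3_e3, dot3_e3, dot3_e3, hs]
    simp [alphaT, hx0, hx1, e3_apply]
    ring
  · have h1 := hasF_pos t ht x hs 0
    have h0 := (hasF_pos t ht x hs 1).fun_neg
    rw [contactVol, oneD, oneD, oneD, alphaT0, alphaT1, alphaT2,
      h1.fderiv, h0.fderiv, fderiv_fun_const]
    rw [dot3_e3, dot3_e3, dot3_e3]
    have hsum : (x 0)^2 + (x 1)^2 = sq2 x := rfl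
    simp only [alphaT, ContinuousLinearMap.neg_apply, ContinuousLinearMap.add_apply,
      ContinuousLinearMap.smul_apply, ContinuousLinearMap.proj_apply, Sx, e3_apply,
      Pi.zero_apply, ContinuousLinearMap.zero_apply, Matrix.cons_val_zero,
      Matrix.cons_val_one, Matrix.head_cons, Matrix.cons_val_two, Matrix.tail_cons, smul_eq_mul,
      show ((0:Fin 3) = 2) = False from by decide, show ((1:Fin 3) = 2) = False from by decide,
      show ((2:Fin 3) = 0) = False from by decide, show ((2:Fin 3) = 1) = False from by decide,
      show ((0:Fin 3) = 1) = False from by decide, show ((1:Fin 3) = 0) = False from by decide,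
      if_true, if_false]
    field_simp
    ring_nf
    linear_combination (2 * deriv t (sq2 x) * sq2 x - 2 * t (sq2 x)) * sq2 x * hsum

lemma part1 (ε : ℝ) (hε : 0 < ε) (x : E3) (hs : 0 < sq2 x) (v : E3) :
    dot3 (alpha2 ε x) v = 0 ↔ dot3 (alphaN ε x) v = 0 := by
  have hkey : dot3 (alpha2 ε x) v = ((sq2 x + ε)/2) * dot3 (alphaN ε x) v := by
    simp only [dot3, Fin.sum_univ_three, alpha2, alphaN, Matrix.cons_val_zero,
      Matrix.cons_val_one, Matrix.head_cons, Matrix.cons_val_two, Matrix.tail_cons]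
    field_simp
  have hk : (sq2 x + ε)/2 ≠ 0 := by positivity
  rw [hkey]
  constructor
  · intro h; rcases mul_eq_zero.mp h with h | h
    · exact absurd h hk
    · exact h
  · intro h; rw [h, mul_zero]

lemma part4 (t : ℝ → ℝ) (ht0 : t 0 = 0) (x : E3) :
    wedge12 (alphaT t) omRes x = 1 - t (sq2 x) := by
  have he : ∀ i j : Fin 3, e3 i j = if j = i then 1 else 0 := by
    intro i j; simp [e3, Pi.single_apply]
  simp only [wedge12, dot3_e3, omRes, alphaT, Matrix.cons_val_zero, Matrix.cons_val_one,
    Matrix.head_cons, Matrix.cons_val_two, Matrix.tail_cons, he,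
    show ((0:Fin 3) = 2) = False from by decide, show ((1:Fin 3) = 2) = False from by decide,
    show ((2:Fin 3) = 0) = False from by decide, show ((2:Fin 3) = 1) = False from by decide,
    show ((0:Fin 3) = 1) = False from by decide, show ((1:Fin 3) = 0) = False from by decide,
    if_true, if_false]
  norm_num
  by_cases hs : sq2 x = 0
  · have h0 := (sq2_zero x hs).1; have h1 := (sq2_zero x hs).2
    simp [h0, h1, hs, ht0]
  · have hsum : (x 0)^2 + (x 1)^2 = sq2 x := rfl
    field_simp
    linear_combination (-(t (sq2 x))) * hsum

/-- on the level set f⁻¹{ε₂} (a solid-torus neighbourhood, in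
coordinates (r,μ,λ)): α₂ has the same kernel on {r>0} as dλ + ((r²−1)/(r²+ε₂))dμ,
and for any α₂' = dλ + t(r²)dμ with t smooth, t(0)=0, t'>0, t(s)=(s−1)/(s+ε₂)
for s ≥ 1+δ:
(a) α₂' is a positive contact form on the whole solid torus including r=0;
(b) ker α₂' = ker α₂ on {r² ≥ 1+δ};
(c) α₂' ∧ ω₀|_{f⁻¹{ε₂}} = (1 − t(r²)) r dr∧dμ∧dλ, positive wherever t(r²) < 1. -/
theorem statement5 (ε δ : ℝ) (hε : 0 < ε) (hδ : 0 < δ)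
    (t : ℝ → ℝ) (ht : ContDiff ℝ (⊤ : ℕ∞) t) (ht0 : t 0 = 0)
    (ht' : ∀ s : ℝ, 0 ≤ s → 0 < deriv t s)
    (htail : ∀ s : ℝ, 1 + δ ≤ s → t s = (s - 1) / (s + ε)) :
    (∀ x : E3, 0 < sq2 x →
      ∀ v : E3, dot3 (alpha2 ε x) v = 0 ↔ dot3 (alphaN ε x) v = 0) ∧
    (∀ x : E3, 0 < contactVol (alphaT t) x) ∧
    (∀ x : E3, 1 + δ ≤ sq2 x →
      ∀ v : E3, dot3 (alphaT t x) v = 0 ↔ dot3 (alpha2 ε x) v = 0) ∧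
    (∀ x : E3, wedge12 (alphaT t) omRes x = 1 - t (sq2 x) ∧
      (t (sq2 x) < 1 → 0 < wedge12 (alphaT t) omRes x)) := by
  refine ⟨fun x hs v => part1 ε hε x hs v, ?_, ?_, ?_⟩
  · intro x
    rw [contactVol_eq t ht ht0 x]
    have := ht' (sq2 x) (by unfold sq2; positivity)
    linarith
  · intro x hx v
    have hs : 0 < sq2 x := by linarith
    have hT : alphaT t x = alphaN ε x := by
      simp only [alphaT, alphaN, htail (sq2 x) hx]
    rw [hT]
    exact (part1 ε hε x hs v).symm
  · intro x
    refine ⟨part4 t ht0 x, fun hlt => ?_⟩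
    rw [part4 t ht0 x]
    linarith
end
end

section
/- With notation as above, on the positive symplectification (S⁺ = ℝ × M⁺, ω⁺ = d(e^t α⁺)) the vector field V⁻ = (g⁺ e^{−t} − 1) ∂_t + e^{−t} Z⁺, defined on ℝ × M⁰, satisfies: L_{V⁻} ω⁺ = −ω⁺ (symplectic contraction), ι_{V⁻} ω⁺|_{t=0} = α⁻, and ω⁺(∂_t, V⁻) = 0. Moreover V⁻ is the unique vector field on ℝ × M⁰ with these three properties. -/
noncomputable section

/-- ℝ⁴ = ℝ_t × ℝ³, coordinates (t, x¹, x², x³). -/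
abbrev E4 : Type := Fin 4 → ℝ

/-- Spatial projection ℝ × M → M. -/
def sp (x : E4) : E3 := ![x 1, x 2, x 3]

/-- The symplectification form ω⁺ = d(e^t α⁺) = e^t (dt ∧ α⁺ + dα⁺) on ℝ × M⁺,
as a 2-form at each point. -/
noncomputable def omegaP (a : E3 → E3) (x u v : E4) : ℝ :=
  Real.exp (x 0) *
    (u 0 * dot3 (a (sp x)) (sp v) - v 0 * dot3 (a (sp x)) (sp u)
      + oneD a (sp x) (sp u) (sp v))

/-- Lie derivative of a 2-form on ℝ⁴ along a vector field, in coordinates. -/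
noncomputable def lieD (W : E4 → E4) (ω : E4 → E4 → E4 → ℝ) (x u v : E4) : ℝ :=
  fderiv ℝ (fun y => ω y u v) x (W x) + ω x (fderiv ℝ W x u) v + ω x u (fderiv ℝ W x v)

/-- Inclusion of a spatial vector as a vector on ℝ × M. -/
def lift (z : E3) : E4 := ![0, z 0, z 1, z 2]

/-- The contraction V⁻ = (g⁺e^{−t} − 1)∂_t + e^{−t}Z⁺ on ℝ × M⁰. -/
noncomputable def VmF (g : E3 → ℝ) (Z : E3 → E3) (x : E4) : E4 :=
  (g (sp x) * Real.exp (-(x 0)) - 1) • (Pi.single 0 1 : E4)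
    + Real.exp (-(x 0)) • lift (Z (sp x))

/-! ### Auxiliary material -/

namespace S9

open Real

/-! #### Linear algebra of `dot3`, `sp`, `lift` -/

lemma dot3_comm (a v : E3) : dot3 a v = dot3 v a := by simp [dot3, mul_comm]
lemma dot3_add_left (a b v : E3) : dot3 (a + b) v = dot3 a v + dot3 b v := by
  simp [dot3, add_mul, Finset.sum_add_distrib]
lemma dot3_sub_left (a b v : E3) : dot3 (a - b) v = dot3 a v - dot3 b v := by
  simp [dot3, sub_mul, Finset.sum_sub_distrib]
lemma dot3_smul_left (c : ℝ) (a v : E3) : dot3 (c • a) v = c * dot3 a v := by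
  simp [dot3, Finset.mul_sum, mul_assoc]
lemma dot3_add_right (a u v : E3) : dot3 a (u + v) = dot3 a u + dot3 a v := by
  simp [dot3, mul_add, Finset.sum_add_distrib]
lemma dot3_sub_right (a u v : E3) : dot3 a (u - v) = dot3 a u - dot3 a v := by
  simp [dot3, mul_sub, Finset.sum_sub_distrib]
lemma dot3_smul_right (c : ℝ) (a v : E3) : dot3 a (c • v) = c * dot3 a v := by
  rw [dot3_comm, dot3_smul_left, dot3_comm]
lemma dot3_zero_left (v : E3) : dot3 0 v = 0 := by simp [dot3]
lemma dot3_zero_right (a : E3) : dot3 a 0 = 0 := by simp [dot3]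
lemma dot3_neg_left (a v : E3) : dot3 (-a) v = - dot3 a v := by simp [dot3]
lemma dot3_neg_right (a v : E3) : dot3 a (-v) = - dot3 a v := by simp [dot3]

lemma sp_lift (z : E3) : sp (lift z) = z := by funext i; fin_cases i <;> rfl
lemma sp_single0 : sp (Pi.single 0 1 : E4) = 0 := by funext i; fin_cases i <;> rfl
lemma sp_smul (c : ℝ) (x : E4) : sp (c • x) = c • sp x := by funext i; fin_cases i <;> rfl
lemma sp_add (x y : E4) : sp (x + y) = sp x + sp y := by funext i; fin_cases i <;> rfl
lemma sp_sub (x y : E4) : sp (x - y) = sp x - sp y := by funext i; fin_cases i <;> rfl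

def spL : E4 →L[ℝ] E3 := ContinuousLinearMap.pi fun i => ContinuousLinearMap.proj i.succ
lemma spL_eq (x : E4) : spL x = sp x := by funext i; fin_cases i <;> rfl
def liftL : E3 →L[ℝ] E4 :=
  ContinuousLinearMap.pi (fun j => Fin.cases 0 (fun i => ContinuousLinearMap.proj i) j)
lemma liftL_eq (z : E3) : liftL z = lift z := by funext j; fin_cases j <;> rfl

def dotL (a : E3) : E3 →L[ℝ] ℝ := ∑ i, a i • (ContinuousLinearMap.proj i : E3 →L[ℝ] ℝ)
lemma dotL_apply (a v : E3) : dotL a v = dot3 a v := by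
  simp [dotL, dot3, ContinuousLinearMap.sum_apply, mul_comm]
lemma dotL_apply' (a v : E3) : dotL a v = dot3 v a := by rw [dotL_apply, dot3_comm]

lemma decomp4 (v : E4) : v = v 0 • (Pi.single 0 1 : E4) + lift (sp v) := by
  funext j; fin_cases j <;> simp [lift, sp]

lemma vec_expand (u : E3) : u = u 0 • e3 0 + u 1 • e3 1 + u 2 • e3 2 := by
  funext i; fin_cases i <;> simp [e3]

/-! #### `oneD` basics -/

lemma oneD_zero_left (a : E3 → E3) (x v : E3) : oneD a x 0 v = 0 := by
  have : (fun y => dot3 (a y) (0 : E3)) = fun _ => (0 : ℝ) := by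
    funext y; exact dot3_zero_right _
  simp [oneD, this]

lemma oneD_zero_right (a : E3 → E3) (x v : E3) : oneD a x v 0 = 0 := by
  have : (fun y => dot3 (a y) (0 : E3)) = fun _ => (0 : ℝ) := by
    funext y; exact dot3_zero_right _
  simp [oneD, this]

lemma oneD_antisymm (a : E3 → E3) (x u v : E3) : oneD a x u v = - oneD a x v u := by
  simp only [oneD]; ring

lemma omega_antisymm (a : E3 → E3) (x u v : E4) : omegaP a x u v = - omegaP a x v u := by
  simp only [omegaP]
  rw [oneD_antisymm]
  ring

/-! #### First derivatives of `dot3`-type functions -/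

lemma hasFDerivAt_dot3 {G : Type} [NormedAddCommGroup G] [NormedSpace ℝ G]
    {f h : G → E3} {f' h' : G →L[ℝ] E3} {x : G}
    (hf : HasFDerivAt f f' x) (hh : HasFDerivAt h h' x) :
    HasFDerivAt (fun y => dot3 (f y) (h y))
      ((dotL (h x)).comp f' + (dotL (f x)).comp h') x := by
  have : ∀ y, dot3 (f y) (h y) = ∑ i : Fin 3, (f y i) * (h y i) := fun y => rfl
  simp only [this]
  have hsum : HasFDerivAt (fun y => ∑ i : Fin 3, (f y i) * (h y i))
      (∑ i : Fin 3, ((f x i) • ((ContinuousLinearMap.proj i : E3 →L[ℝ] ℝ).comp h')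
        + (h x i) • ((ContinuousLinearMap.proj i : E3 →L[ℝ] ℝ).comp f'))) x := by
    apply HasFDerivAt.fun_sum
    intro i _
    have hfi : HasFDerivAt (fun y => f y i)
        ((ContinuousLinearMap.proj i : E3 →L[ℝ] ℝ).comp f') x :=
      (ContinuousLinearMap.proj i : E3 →L[ℝ] ℝ).hasFDerivAt.comp x hf
    have hhi : HasFDerivAt (fun y => h y i)
        ((ContinuousLinearMap.proj i : E3 →L[ℝ] ℝ).comp h') x :=
      (ContinuousLinearMap.proj i : E3 →L[ℝ] ℝ).hasFDerivAt.comp x hh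
    simpa [add_comm] using hfi.fun_mul hhi
  refine hsum.congr_fderiv ?_
  ext w
  simp [dotL, dot3, ContinuousLinearMap.sum_apply, Finset.sum_add_distrib, mul_comm]
  ring

lemma hasFDerivAt_dotA (a : E3 → E3) {p : E3} (ha : DifferentiableAt ℝ a p) (v : E3) :
    HasFDerivAt (fun q => dot3 (a q) v) ((dotL v).comp (fderiv ℝ a p)) p := by
  have h := (dotL v).hasFDerivAt.comp p ha.hasFDerivAt
  simpa [Function.comp_def, dotL_apply, dot3_comm] using h

lemma oneD_eq {a : E3 → E3} {p : E3} (ha : DifferentiableAt ℝ a p) (u v : E3) :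
    oneD a p u v = dot3 (fderiv ℝ a p u) v - dot3 (fderiv ℝ a p v) u := by
  rw [oneD, (hasFDerivAt_dotA a ha v).fderiv, (hasFDerivAt_dotA a ha u).fderiv]
  simp [dotL_apply, dot3_comm]

section onMp
variable {Mp : Set E3} {a : E3 → E3} {p : E3}

lemma diffA (hMp : IsOpen Mp) (ha : ContDiffOn ℝ (⊤ : ℕ∞) a Mp) (hp : p ∈ Mp) :
    DifferentiableAt ℝ a p :=
  (ha.contDiffAt (hMp.mem_nhds hp)).differentiableAt (by simp)

lemma diffF (hMp : IsOpen Mp) (ha : ContDiffOn ℝ (⊤ : ℕ∞) a Mp) (hp : p ∈ Mp) :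
    DifferentiableAt ℝ (fderiv ℝ a) p := by
  have h1 : ContDiffOn ℝ 1 (fderiv ℝ a) Mp := ha.fderiv_of_isOpen hMp (WithTop.coe_le_coe.2 le_top)
  exact (h1.differentiableOn one_ne_zero).differentiableAt (hMp.mem_nhds hp)

lemma sndSymm (hMp : IsOpen Mp) (ha : ContDiffOn ℝ (⊤ : ℕ∞) a Mp) (hp : p ∈ Mp) :
    ∀ z w, fderiv ℝ (fderiv ℝ a) p z w = fderiv ℝ (fderiv ℝ a) p w z :=
  (ha.contDiffAt (hMp.mem_nhds hp)).isSymmSndFDerivAt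
    (by rw [minSmoothness_of_isRCLikeNormedField]; exact WithTop.coe_le_coe.2 le_top)

lemma hasFDerivAt_oneD (hMp : IsOpen Mp) (ha : ContDiffOn ℝ (⊤ : ℕ∞) a Mp) (hp : p ∈ Mp) (u v : E3) :
    HasFDerivAt (fun q => oneD a q u v)
      ((dotL v).comp ((ContinuousLinearMap.apply ℝ E3 u).comp (fderiv ℝ (fderiv ℝ a) p))
        - (dotL u).comp ((ContinuousLinearMap.apply ℝ E3 v).comp (fderiv ℝ (fderiv ℝ a) p))) p := by
  have hev : (fun q => oneD a q u v) =ᶠ[nhds p]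
      (fun q => dot3 (fderiv ℝ a q u) v - dot3 (fderiv ℝ a q v) u) := by
    filter_upwards [hMp.mem_nhds hp] with q hq
    exact oneD_eq (diffA hMp ha hq) u v
  have h1 : HasFDerivAt (fun q => dot3 (fderiv ℝ a q u) v)
      ((dotL v).comp ((ContinuousLinearMap.apply ℝ E3 u).comp (fderiv ℝ (fderiv ℝ a) p))) p := by
    have := ((dotL v).comp (ContinuousLinearMap.apply ℝ E3 u)).hasFDerivAt.comp p
      (diffF hMp ha hp).hasFDerivAt
    simpa [Function.comp_def, dotL_apply, dot3_comm, ContinuousLinearMap.comp_assoc] using this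
  have h2 : HasFDerivAt (fun q => dot3 (fderiv ℝ a q v) u)
      ((dotL u).comp ((ContinuousLinearMap.apply ℝ E3 v).comp (fderiv ℝ (fderiv ℝ a) p))) p := by
    have := ((dotL u).comp (ContinuousLinearMap.apply ℝ E3 v)).hasFDerivAt.comp p
      (diffF hMp ha hp).hasFDerivAt
    simpa [Function.comp_def, dotL_apply, dot3_comm, ContinuousLinearMap.comp_assoc] using this
  exact (h1.sub h2).congr_of_eventuallyEq hev

/-! #### Derivative of `y ↦ omegaP a y u v` -/

def omegaD (a : E3 → E3) (x u v : E4) : E4 →L[ℝ] ℝ :=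
  omegaP a x u v • (ContinuousLinearMap.proj 0 : E4 →L[ℝ] ℝ)
  + Real.exp (x 0) •
    (((u 0 • ((dotL (sp v)).comp ((fderiv ℝ a (sp x)).comp spL))
      - v 0 • ((dotL (sp u)).comp ((fderiv ℝ a (sp x)).comp spL)))
      + (((dotL (sp v)).comp ((ContinuousLinearMap.apply ℝ E3 (sp u)).comp
            ((fderiv ℝ (fderiv ℝ a) (sp x)).comp spL)))
        - ((dotL (sp u)).comp ((ContinuousLinearMap.apply ℝ E3 (sp v)).comp
            ((fderiv ℝ (fderiv ℝ a) (sp x)).comp spL))))))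

lemma omegaD_apply (a : E3 → E3) (x u v w : E4) : omegaD a x u v w =
    w 0 * omegaP a x u v + Real.exp (x 0) *
      (u 0 * dot3 (fderiv ℝ a (sp x) (sp w)) (sp v)
        - v 0 * dot3 (fderiv ℝ a (sp x) (sp w)) (sp u)
        + (dot3 (fderiv ℝ (fderiv ℝ a) (sp x) (sp w) (sp u)) (sp v)
          - dot3 (fderiv ℝ (fderiv ℝ a) (sp x) (sp w) (sp v)) (sp u))) := by
  simp [omegaD, dotL_apply', spL_eq]
  ring

lemma hasFDerivAt_omega (hMp : IsOpen Mp) (ha : ContDiffOn ℝ (⊤ : ℕ∞) a Mp)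
    {x : E4} (hx : sp x ∈ Mp) (u v : E4) :
    HasFDerivAt (fun y => omegaP a y u v) (omegaD a x u v) x := by
  set Φ' : E3 →L[ℝ] ℝ :=
    (u 0 • ((dotL (sp v)).comp (fderiv ℝ a (sp x)))
      - v 0 • ((dotL (sp u)).comp (fderiv ℝ a (sp x))))
      + (((dotL (sp v)).comp ((ContinuousLinearMap.apply ℝ E3 (sp u)).comp
            (fderiv ℝ (fderiv ℝ a) (sp x))))
        - ((dotL (sp u)).comp ((ContinuousLinearMap.apply ℝ E3 (sp v)).comp
            (fderiv ℝ (fderiv ℝ a) (sp x))))) with hΦ'def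
  have hΦ : HasFDerivAt (fun q : E3 => u 0 * dot3 (a q) (sp v) - v 0 * dot3 (a q) (sp u)
      + oneD a q (sp u) (sp v)) Φ' (sp x) := by
    exact ((((hasFDerivAt_dotA a (diffA hMp ha hx) (sp v)).const_mul (u 0)).sub
      ((hasFDerivAt_dotA a (diffA hMp ha hx) (sp u)).const_mul (v 0))).add
      (hasFDerivAt_oneD hMp ha hx (sp u) (sp v)))
  have hsp : HasFDerivAt (fun y : E4 => u 0 * dot3 (a (sp y)) (sp v)
      - v 0 * dot3 (a (sp y)) (sp u) + oneD a (sp y) (sp u) (sp v)) (Φ'.comp spL) x := by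
    have h0 : HasFDerivAt (fun q : E3 => u 0 * dot3 (a q) (sp v) - v 0 * dot3 (a q) (sp u)
        + oneD a q (sp u) (sp v)) Φ' (spL x) := by rw [spL_eq]; exact hΦ
    have := h0.comp x spL.hasFDerivAt
    simpa [Function.comp_def, spL_eq] using this
  have hexp : HasFDerivAt (fun y : E4 => Real.exp (y 0))
      (Real.exp (x 0) • (ContinuousLinearMap.proj 0 : E4 →L[ℝ] ℝ)) x := by
    have := ((ContinuousLinearMap.proj 0 : E4 →L[ℝ] ℝ).hasFDerivAt (x := x)).exp
    simpa using this
  have hmul := hexp.mul hsp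
  refine hmul.congr_fderiv ?_
  ext w
  simp [omegaD, omegaP, hΦ'def, dotL_apply', spL_eq, smul_smul]
  ring

end onMp

/-! #### Derivative of `VmF` -/

def VD (g : E3 → ℝ) (Z : E3 → E3) (x : E4) : E4 →L[ℝ] E4 :=
  ((Real.exp (-(x 0)) • ((fderiv ℝ g (sp x)).comp spL)
    - (g (sp x) * Real.exp (-(x 0))) • (ContinuousLinearMap.proj 0 : E4 →L[ℝ] ℝ)).smulRight
      (Pi.single 0 1 : E4))
  + (((-Real.exp (-(x 0))) • (ContinuousLinearMap.proj 0 : E4 →L[ℝ] ℝ)).smulRight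
      (lift (Z (sp x))))
  + (Real.exp (-(x 0)) • (liftL.comp ((fderiv ℝ Z (sp x)).comp spL)))

lemma VD_apply (g : E3 → ℝ) (Z : E3 → E3) (x u : E4) :
    VD g Z x u =
      (Real.exp (-(x 0)) * (fderiv ℝ g (sp x) (sp u)) - g (sp x) * Real.exp (-(x 0)) * u 0)
          • (Pi.single 0 1 : E4)
        + (-(Real.exp (-(x 0)) * u 0)) • lift (Z (sp x))
        + Real.exp (-(x 0)) • lift (fderiv ℝ Z (sp x) (sp u)) := by
  simp [VD, spL_eq, liftL_eq, sub_smul, neg_smul]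

lemma hasFDerivAt_VmF {Mo : Set E3} (hMo : IsOpen Mo) {g : E3 → ℝ} {Z : E3 → E3}
    (hgs : ContDiffOn ℝ (⊤ : ℕ∞) g Mo) (hZs : ContDiffOn ℝ (⊤ : ℕ∞) Z Mo)
    {x : E4} (hx : sp x ∈ Mo) :
    HasFDerivAt (VmF g Z) (VD g Z x) x := by
  have hgd : DifferentiableAt ℝ g (sp x) :=
    (hgs.contDiffAt (hMo.mem_nhds hx)).differentiableAt (by simp)
  have hZd : DifferentiableAt ℝ Z (sp x) :=
    (hZs.contDiffAt (hMo.mem_nhds hx)).differentiableAt (by simp)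
  have hgsp : HasFDerivAt (fun y : E4 => g (sp y)) ((fderiv ℝ g (sp x)).comp spL) x := by
    have h0 : HasFDerivAt g (fderiv ℝ g (sp x)) (spL x) := by rw [spL_eq]; exact hgd.hasFDerivAt
    have := h0.comp x spL.hasFDerivAt
    simpa [Function.comp_def, spL_eq] using this
  have hexp : HasFDerivAt (fun y : E4 => Real.exp (-(y 0)))
      (Real.exp (-(x 0)) • (-(ContinuousLinearMap.proj 0 : E4 →L[ℝ] ℝ))) x := by
    have hneg : HasFDerivAt (fun y : E4 => -(y 0))
        (-(ContinuousLinearMap.proj 0 : E4 →L[ℝ] ℝ)) x :=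
      (ContinuousLinearMap.proj 0 : E4 →L[ℝ] ℝ).hasFDerivAt.neg
    exact hneg.exp
  have hZsp : HasFDerivAt (fun y : E4 => liftL (Z (spL y)))
      (liftL.comp ((fderiv ℝ Z (sp x)).comp spL)) x := by
    have h0 : HasFDerivAt Z (fderiv ℝ Z (sp x)) (spL x) := by rw [spL_eq]; exact hZd.hasFDerivAt
    exact liftL.hasFDerivAt.comp x ((h0.comp x spL.hasFDerivAt))
  have hc1 : HasFDerivAt (fun y : E4 => g (sp y) * Real.exp (-(y 0)) - 1)
      (g (sp x) • (Real.exp (-(x 0)) • (-(ContinuousLinearMap.proj 0 : E4 →L[ℝ] ℝ)))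
        + Real.exp (-(x 0)) • ((fderiv ℝ g (sp x)).comp spL)) x := by
    have := (hgsp.mul hexp).sub_const 1
    simpa [smul_smul] using this
  have h1 := hc1.smul_const (Pi.single 0 1 : E4)
  have h2 := hexp.smul hZsp
  have hsum := h1.add h2
  have hVmF : (VmF g Z) = fun y => (g (sp y) * Real.exp (-(y 0)) - 1) • (Pi.single 0 1 : E4)
      + Real.exp (-(y 0)) • liftL (Z (spL y)) := by
    funext y; simp [VmF, liftL_eq, spL_eq]
  rw [hVmF]
  refine hsum.congr_fderiv ?_
  ext w : 1
  rw [VD_apply]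
  simp [spL_eq, liftL_eq, smul_smul]
  module

lemma VmF_zero (g : E3 → ℝ) (Z : E3 → E3) (x : E4) :
    (VmF g Z x) 0 = g (sp x) * Real.exp (-(x 0)) - 1 := by
  simp [VmF, lift]

lemma sp_VmF (g : E3 → ℝ) (Z : E3 → E3) (x : E4) :
    sp (VmF g Z x) = Real.exp (-(x 0)) • Z (sp x) := by
  rw [VmF, sp_add, sp_smul, sp_smul, sp_single0, sp_lift]; simp

lemma VD_zero (g : E3 → ℝ) (Z : E3 → E3) (x u : E4) :
    (VD g Z x u) 0
      = Real.exp (-(x 0)) * (fderiv ℝ g (sp x) (sp u)) - g (sp x) * Real.exp (-(x 0)) * u 0 := by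
  rw [VD_apply]; simp [lift, Matrix.vecHead]

lemma sp_VD (g : E3 → ℝ) (Z : E3 → E3) (x u : E4) :
    sp (VD g Z x u)
      = (-(Real.exp (-(x 0)) * u 0)) • Z (sp x)
        + Real.exp (-(x 0)) • fderiv ℝ Z (sp x) (sp u) := by
  rw [VD_apply, sp_add, sp_add, sp_smul, sp_smul, sp_smul, sp_single0, sp_lift, sp_lift]
  simp


section part4infra
variable {Mp : Set E3} {a : E3 → E3}

lemma sp_cont : Continuous sp := by
  have : sp = fun y => spL y := funext fun y => (spL_eq y).symm
  rw [this]; exact spL.continuous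

/-- The 1-form ι_w ω as a continuous linear map in w (valid formula at differentiability pts). -/
def omegaL (a : E3 → E3) (x v : E4) : E4 →L[ℝ] ℝ :=
  Real.exp (x 0) • ((dot3 (a (sp x)) (sp v)) • (ContinuousLinearMap.proj 0 : E4 →L[ℝ] ℝ)
    - v 0 • ((dotL (a (sp x))).comp spL)
    + ((dotL (sp v)).comp ((fderiv ℝ a (sp x)).comp spL)
       - (dotL (fderiv ℝ a (sp x) (sp v))).comp spL))

lemma omegaL_apply {x : E4} (ha : DifferentiableAt ℝ a (sp x)) (v w : E4) :
    omegaL a x v w = omegaP a x w v := by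
  simp [omegaL, dotL_apply', spL_eq, omegaP, oneD_eq ha]
  rw [dot3_comm (sp w) (a (sp x)), dot3_comm (sp w) ((fderiv ℝ a (sp x)) (sp v))]
  ring

lemma hasFDerivAt_contraction (hMp : IsOpen Mp) (ha : ContDiffOn ℝ (⊤ : ℕ∞) a Mp)
    {x : E4} (hx : sp x ∈ Mp) {W : E4 → E4} {W' : E4 →L[ℝ] E4}
    (hW : HasFDerivAt W W' x) (v : E4) :
    HasFDerivAt (fun y => omegaP a y (W y) v)
      (omegaD a x (W x) v + (omegaL a x v).comp W') x := by
  have hspm : {y : E4 | sp y ∈ Mp} ∈ nhds x :=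
    (hMp.preimage sp_cont).mem_nhds hx
  have hW0 : HasFDerivAt (fun y => W y 0)
      ((ContinuousLinearMap.proj 0 : E4 →L[ℝ] ℝ).comp W') x :=
    (ContinuousLinearMap.proj (0 : Fin 4) : E4 →L[ℝ] ℝ).hasFDerivAt.comp x hW
  have hA : HasFDerivAt (fun y : E4 => a (sp y)) ((fderiv ℝ a (sp x)).comp spL) x := by
    have h0 : HasFDerivAt a (fderiv ℝ a (sp x)) (spL x) := by
      rw [spL_eq]; exact (diffA hMp ha hx).hasFDerivAt
    have := h0.comp x spL.hasFDerivAt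
    simpa [Function.comp_def, spL_eq] using this
  have hWsp : HasFDerivAt (fun y : E4 => sp (W y)) (spL.comp W') x := by
    have := spL.hasFDerivAt.comp x hW
    simpa [Function.comp_def, spL_eq] using this
  have hAv : HasFDerivAt (fun y : E4 => dot3 (a (sp y)) (sp v))
      (((dotL (sp v)).comp ((fderiv ℝ a (sp x)).comp spL))) x := by
    have := (dotL (sp v)).hasFDerivAt.comp x hA
    simpa [Function.comp_def, dotL_apply, dot3_comm, ContinuousLinearMap.comp_assoc] using this
  have q2 := hasFDerivAt_dot3 hA hWsp
  have hF : HasFDerivAt (fun y : E4 => fderiv ℝ a (sp y))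
      ((fderiv ℝ (fderiv ℝ a) (sp x)).comp spL) x := by
    have h0 : HasFDerivAt (fderiv ℝ a) (fderiv ℝ (fderiv ℝ a) (sp x)) (spL x) := by
      rw [spL_eq]; exact (diffF hMp ha hx).hasFDerivAt
    have := h0.comp x spL.hasFDerivAt
    simpa [Function.comp_def, spL_eq] using this
  have q3f := hF.clm_apply hWsp
  have q3 : HasFDerivAt (fun y : E4 => dot3 (fderiv ℝ a (sp y) (sp (W y))) (sp v))
      ((dotL (sp v)).comp ((fderiv ℝ a (sp x)).comp (spL.comp W')
        + ((fderiv ℝ (fderiv ℝ a) (sp x)).comp spL).flip (sp (W x)))) x := by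
    have := (dotL (sp v)).hasFDerivAt.comp x q3f
    simpa [Function.comp_def, dotL_apply, dot3_comm] using this
  have q4f : HasFDerivAt (fun y : E4 => fderiv ℝ a (sp y) (sp v))
      ((ContinuousLinearMap.apply ℝ E3 (sp v)).comp
        ((fderiv ℝ (fderiv ℝ a) (sp x)).comp spL)) x := by
    have := (ContinuousLinearMap.apply ℝ E3 (sp v)).hasFDerivAt.comp x hF
    simpa [Function.comp_def] using this
  have q4 := hasFDerivAt_dot3 q4f hWsp
  have hexp : HasFDerivAt (fun y : E4 => Real.exp (y 0))
      (Real.exp (x 0) • (ContinuousLinearMap.proj 0 : E4 →L[ℝ] ℝ)) x := by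
    have := ((ContinuousLinearMap.proj 0 : E4 →L[ℝ] ℝ).hasFDerivAt (x := x)).exp
    simpa using this
  have hΦ := ((hW0.mul hAv).sub (q2.const_mul (v 0))).add (q3.sub q4)
  have htot := hexp.mul hΦ
  have hev : (fun y => omegaP a y (W y) v) =ᶠ[nhds x]
      (fun y => Real.exp (y 0) * (W y 0 * dot3 (a (sp y)) (sp v)
        - v 0 * dot3 (a (sp y)) (sp (W y))
        + (dot3 (fderiv ℝ a (sp y) (sp (W y))) (sp v)
          - dot3 (fderiv ℝ a (sp y) (sp v)) (sp (W y))))) := by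
    filter_upwards [hspm] with y hy
    rw [omegaP, oneD_eq (diffA hMp ha hy)]
  refine (htot.congr_of_eventuallyEq hev).congr_fderiv ?_
  ext w
  simp only [ContinuousLinearMap.add_apply, ContinuousLinearMap.comp_apply]
  rw [omegaD_apply, omegaL_apply (diffA hMp ha hx), omegaP, omegaP,
    oneD_eq (diffA hMp ha hx), oneD_eq (diffA hMp ha hx)]
  simp [dotL_apply', spL_eq, smul_smul]
  rw [dot3_comm (sp (W' w)) (a (sp x)), dot3_comm (sp (W' w)) ((fderiv ℝ a (sp x)) (sp v))]
  ring

lemma domega0 (hMp : IsOpen Mp) (ha : ContDiffOn ℝ (⊤ : ℕ∞) a Mp)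
    {x : E4} (hx : sp x ∈ Mp) (w u v : E4) :
    omegaD a x u v w - omegaD a x w v u + omegaD a x w u v = 0 := by
  have hsym := sndSymm hMp ha hx
  have Sa : dot3 (fderiv ℝ (fderiv ℝ a) (sp x) (sp w) (sp u)) (sp v)
      = dot3 (fderiv ℝ (fderiv ℝ a) (sp x) (sp u) (sp w)) (sp v) := by rw [hsym]
  have Sb : dot3 (fderiv ℝ (fderiv ℝ a) (sp x) (sp w) (sp v)) (sp u)
      = dot3 (fderiv ℝ (fderiv ℝ a) (sp x) (sp v) (sp w)) (sp u) := by rw [hsym]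
  have Sc : dot3 (fderiv ℝ (fderiv ℝ a) (sp x) (sp u) (sp v)) (sp w)
      = dot3 (fderiv ℝ (fderiv ℝ a) (sp x) (sp v) (sp u)) (sp w) := by rw [hsym]
  simp only [omegaD_apply, omegaP, oneD_eq (diffA hMp ha hx)]
  linear_combination (Real.exp (x 0)) * (Sa - Sb + Sc)

lemma omega_u_sub {x : E4} (ha : DifferentiableAt ℝ a (sp x)) (w w' v : E4) :
    omegaP a x (w - w') v = omegaP a x w v - omegaP a x w' v := by
  simp only [omegaP, oneD_eq ha, sp_sub, Pi.sub_apply, map_sub, dot3_sub_left, dot3_sub_right]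
  ring

lemma omega_v_decomp {x : E4} (ha : DifferentiableAt ℝ a (sp x)) (u v : E4) :
    omegaP a x u v = v 0 * omegaP a x u (Pi.single 0 1) + omegaP a x u (lift (sp v)) := by
  have h1 : (Pi.single 0 1 : E4) 0 = 1 := by simp
  have h2 : (lift (sp v)) 0 = 0 := rfl
  simp only [omegaP, oneD_eq ha, sp_single0, sp_lift, h1, h2, dot3_zero_right, map_zero,
    dot3_zero_left]
  ring

lemma e3_apply (i j : Fin 3) : e3 i j = if j = i then 1 else 0 := by
  simp [e3, Pi.single_apply]

lemma lift_zero : lift (0 : E3) = 0 := by funext j; fin_cases j <;> rfl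

lemma triple_aux {p : E3} (ha : DifferentiableAt ℝ a p) (z0 z1 z2 u0 u1 u2 v0 v1 v2 : ℝ) :
    dot3 (a p) (z0 • e3 0 + z1 • e3 1 + z2 • e3 2)
        * oneD a p (u0 • e3 0 + u1 • e3 1 + u2 • e3 2) (v0 • e3 0 + v1 • e3 1 + v2 • e3 2)
      - dot3 (a p) (u0 • e3 0 + u1 • e3 1 + u2 • e3 2)
        * oneD a p (z0 • e3 0 + z1 • e3 1 + z2 • e3 2) (v0 • e3 0 + v1 • e3 1 + v2 • e3 2)
      + dot3 (a p) (v0 • e3 0 + v1 • e3 1 + v2 • e3 2)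
        * oneD a p (z0 • e3 0 + z1 • e3 1 + z2 • e3 2) (u0 • e3 0 + u1 • e3 1 + u2 • e3 2)
    = contactVol a p *
        (z0 * (u1 * v2 - u2 * v1) - z1 * (u0 * v2 - u2 * v0) + z2 * (u0 * v1 - u1 * v0)) := by
  simp only [contactVol, oneD_eq ha, map_add, map_smul, dot3_add_left, dot3_smul_left,
    dot3_add_right, dot3_smul_right, smul_eq_mul]
  ring

lemma triple {p : E3} (ha : DifferentiableAt ℝ a p) (z u v : E3) :
    dot3 (a p) z * oneD a p u v - dot3 (a p) u * oneD a p z v + dot3 (a p) v * oneD a p z u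
    = contactVol a p *
        (z 0 * (u 1 * v 2 - u 2 * v 1) - z 1 * (u 0 * v 2 - u 2 * v 0)
          + z 2 * (u 0 * v 1 - u 1 * v 0)) := by
  have h := triple_aux ha (z 0) (z 1) (z 2) (u 0) (u 1) (u 2) (v 0) (v 1) (v 2)
  rwa [← vec_expand z, ← vec_expand u, ← vec_expand v] at h

lemma nondeg {x : E4} (hp : 0 < contactVol a (sp x)) (ha : DifferentiableAt ℝ a (sp x))
    (d : E4) (h0 : ∀ v : E4, omegaP a x d v = 0) : d = 0 := by
  have hE := Real.exp_ne_zero (x 0)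
  have h1 : dot3 (a (sp x)) (sp d) = 0 := by
    have h := h0 (Pi.single 0 1)
    rw [omegaP, sp_single0, oneD_zero_right, dot3_zero_right] at h
    have h' := (mul_eq_zero.1 h).resolve_left hE
    have hs : (Pi.single 0 1 : E4) 0 = 1 := by simp
    rw [hs] at h'
    linear_combination -h'
  have h2 : ∀ w : E3, d 0 * dot3 (a (sp x)) w + oneD a (sp x) (sp d) w = 0 := by
    intro w
    have h := h0 (lift w)
    rw [omegaP, sp_lift] at h
    have hlw : (lift w) 0 = 0 := rfl
    rw [hlw] at h
    have h' := (mul_eq_zero.1 h).resolve_left hE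
    linear_combination h'
  have hz : sp d = 0 := by
    have hdet : ∀ u v : E3, contactVol a (sp x) *
        ((sp d) 0 * (u 1 * v 2 - u 2 * v 1) - (sp d) 1 * (u 0 * v 2 - u 2 * v 0)
          + (sp d) 2 * (u 0 * v 1 - u 1 * v 0)) = 0 := by
      intro u v
      have ht := triple ha (sp d) u v
      have du := h2 u
      have dv := h2 v
      linear_combination (-1 : ℝ) * ht + oneD a (sp x) u v * h1
        - dot3 (a (sp x)) u * dv + dot3 (a (sp x)) v * du
    funext i
    fin_cases i
    · have h := hdet (e3 1) (e3 2)
      simp only [e3_apply, Fin.ext_iff] at h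
      norm_num at h
      simpa using h.resolve_left hp.ne'
    · have h := hdet (e3 0) (e3 2)
      simp only [e3_apply, Fin.ext_iff] at h
      norm_num at h
      simpa using h.resolve_left hp.ne'
    · have h := hdet (e3 0) (e3 1)
      simp only [e3_apply, Fin.ext_iff] at h
      norm_num at h
      simpa using h.resolve_left hp.ne'
  have hc : d 0 = 0 := by
    by_contra hne
    have hA : ∀ w : E3, dot3 (a (sp x)) w = 0 := by
      intro w
      have h := h2 w
      rw [hz, oneD_zero_left, add_zero] at h
      exact (mul_eq_zero.1 h).resolve_left hne
    have hcv : contactVol a (sp x) = 0 := by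
      rw [contactVol, hA (e3 0), hA (e3 1), hA (e3 2)]; ring
    exact hp.ne' hcv
  have hd := decomp4 d
  rw [hc, hz, lift_zero, zero_smul, zero_add] at hd
  exact hd

end part4infra

section keys
variable {Mp Mn : Set E3} {ap an Z : E3 → E3} {g : E3 → ℝ} {p : E3}

lemma keyI1 (hMp : IsOpen Mp) (hMn : IsOpen Mn) (hap : ContDiffOn ℝ (⊤ : ℕ∞) ap Mp)
    (hZs : ContDiffOn ℝ (⊤ : ℕ∞) Z (Mp ∩ Mn))
    (hZ1 : ∀ q ∈ Mp ∩ Mn, dot3 (ap q) (Z q) = 0) (hp : p ∈ Mp ∩ Mn) (z : E3) :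
    dot3 (fderiv ℝ ap p z) (Z p) + dot3 (ap p) (fderiv ℝ Z p z) = 0 := by
  have hMo : IsOpen (Mp ∩ Mn) := hMp.inter hMn
  have hZd : DifferentiableAt ℝ Z p := (hZs.contDiffAt (hMo.mem_nhds hp)).differentiableAt (by simp)
  have hd := hasFDerivAt_dot3 (diffA hMp hap hp.1).hasFDerivAt hZd.hasFDerivAt
  have hev : (fun q => dot3 (ap q) (Z q)) =ᶠ[nhds p] (fun _ => (0:ℝ)) := by
    filter_upwards [hMo.mem_nhds hp] with q hq; exact hZ1 q hq
  have h0 : ((dotL (Z p)).comp (fderiv ℝ ap p) + (dotL (ap p)).comp (fderiv ℝ Z p))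
      = (0 : E3 →L[ℝ] ℝ) := by
    rw [← hd.fderiv, hev.fderiv_eq]; exact fderiv_const_apply 0
  have := ContinuousLinearMap.ext_iff.1 h0 z
  simpa [dotL_apply, dot3_comm] using this

lemma keyI3 (hMp : IsOpen Mp) (hMn : IsOpen Mn) (hap : ContDiffOn ℝ (⊤ : ℕ∞) ap Mp)
    (han : ContDiffOn ℝ (⊤ : ℕ∞) an Mn)
    (hgs : ContDiffOn ℝ (⊤ : ℕ∞) g (Mp ∩ Mn)) (hZs : ContDiffOn ℝ (⊤ : ℕ∞) Z (Mp ∩ Mn))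
    (hZ3 : ∀ q ∈ Mp ∩ Mn, ∀ v : E3,
      oneD ap q (Z q) v = dot3 (ap q + an q) v - g q * dot3 (ap q) v)
    (hp : p ∈ Mp ∩ Mn) (v z : E3) :
    dot3 (fderiv ℝ (fderiv ℝ ap) p z (Z p)) v + dot3 (fderiv ℝ ap p (fderiv ℝ Z p z)) v
      - dot3 (fderiv ℝ (fderiv ℝ ap) p z v) (Z p) - dot3 (fderiv ℝ ap p v) (fderiv ℝ Z p z)
    = dot3 (fderiv ℝ ap p z) v + dot3 (fderiv ℝ an p z) v
      - fderiv ℝ g p z * dot3 (ap p) v - g p * dot3 (fderiv ℝ ap p z) v := by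
  have hMo : IsOpen (Mp ∩ Mn) := hMp.inter hMn
  have hZd : DifferentiableAt ℝ Z p := (hZs.contDiffAt (hMo.mem_nhds hp)).differentiableAt (by simp)
  have hgd : DifferentiableAt ℝ g p := (hgs.contDiffAt (hMo.mem_nhds hp)).differentiableAt (by simp)
  have hFd : DifferentiableAt ℝ (fderiv ℝ ap) p := diffF hMp hap hp.1
  have hL1 : HasFDerivAt (fun q => (fderiv ℝ ap q) (Z q))
      ((fderiv ℝ ap p).comp (fderiv ℝ Z p) + (fderiv ℝ (fderiv ℝ ap) p).flip (Z p)) p :=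
    hFd.hasFDerivAt.clm_apply hZd.hasFDerivAt
  have hL1' : HasFDerivAt (fun q => dot3 ((fderiv ℝ ap q) (Z q)) v)
      ((dotL v).comp ((fderiv ℝ ap p).comp (fderiv ℝ Z p)
        + (fderiv ℝ (fderiv ℝ ap) p).flip (Z p))) p := by
    have := (dotL v).hasFDerivAt.comp p hL1
    simpa [Function.comp_def, dotL_apply, dot3_comm] using this
  have hL2f : HasFDerivAt (fun q => (fderiv ℝ ap q) v)
      ((ContinuousLinearMap.apply ℝ E3 v).comp (fderiv ℝ (fderiv ℝ ap) p)) p := by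
    have := (ContinuousLinearMap.apply ℝ E3 v).hasFDerivAt.comp p hFd.hasFDerivAt
    simpa [Function.comp_def] using this
  have hL2 : HasFDerivAt (fun q => dot3 ((fderiv ℝ ap q) v) (Z q))
      ((dotL (Z p)).comp ((ContinuousLinearMap.apply ℝ E3 v).comp (fderiv ℝ (fderiv ℝ ap) p))
        + (dotL ((fderiv ℝ ap p) v)).comp (fderiv ℝ Z p)) p :=
    hasFDerivAt_dot3 hL2f hZd.hasFDerivAt
  have hL := hL1'.sub hL2
  have hR1 := hasFDerivAt_dotA ap (diffA hMp hap hp.1) v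
  have hR2 := hasFDerivAt_dotA an (diffA hMn han hp.2) v
  have hR3 := hgd.hasFDerivAt.mul (hasFDerivAt_dotA ap (diffA hMp hap hp.1) v)
  have hR := (hR1.add hR2).sub hR3
  have hev : (fun q => dot3 ((fderiv ℝ ap q) (Z q)) v - dot3 ((fderiv ℝ ap q) v) (Z q))
      =ᶠ[nhds p] (fun q => dot3 (ap q) v + dot3 (an q) v - g q * dot3 (ap q) v) := by
    filter_upwards [hMo.mem_nhds hp, hMp.mem_nhds hp.1] with q hq hqp
    have h1 := hZ3 q hq v
    rw [oneD_eq (diffA hMp hap hqp) (Z q) v, dot3_add_left] at h1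
    exact h1
  have hEq : ((dotL v).comp ((fderiv ℝ ap p).comp (fderiv ℝ Z p)
        + (fderiv ℝ (fderiv ℝ ap) p).flip (Z p))
      - ((dotL (Z p)).comp ((ContinuousLinearMap.apply ℝ E3 v).comp (fderiv ℝ (fderiv ℝ ap) p))
        + (dotL ((fderiv ℝ ap p) v)).comp (fderiv ℝ Z p)))
      = ((dotL v).comp (fderiv ℝ ap p) + (dotL v).comp (fderiv ℝ an p)
        - (g p • (dotL v).comp (fderiv ℝ ap p)
            + dot3 (ap p) v • fderiv ℝ g p)) := by
    rw [← hL.fderiv, ← hR.fderiv]; exact hev.fderiv_eq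
  have := ContinuousLinearMap.ext_iff.1 hEq z
  simp only [ContinuousLinearMap.sub_apply, ContinuousLinearMap.add_apply,
    ContinuousLinearMap.comp_apply, ContinuousLinearMap.flip_apply,
    ContinuousLinearMap.smul_apply, ContinuousLinearMap.apply_apply, smul_eq_mul,
    dotL_apply, ContinuousLinearMap.map_add, dot3_add_left] at this
  rw [dot3_comm (((fderiv ℝ (fderiv ℝ ap) p) z) (Z p)) v,
    dot3_comm ((fderiv ℝ ap p) ((fderiv ℝ Z p) z)) v,
    dot3_comm (((fderiv ℝ (fderiv ℝ ap) p) z) v) (Z p),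
    dot3_comm ((fderiv ℝ ap p) z) v, dot3_comm ((fderiv ℝ an p) z) v]
  linear_combination this

end keys

end S9

open S9 Real in
/-- on the positive symplectification (ℝ × M⁺, ω⁺ = d(e^tα⁺)) of a
contact pair (α⁺, α⁻), the vector field V⁻ = (g⁺e^{−t} − 1)∂_t + e^{−t}Z⁺ on
ℝ × M⁰ satisfies L_{V⁻}ω⁺ = −ω⁺, ι_{V⁻}ω⁺|_{t=0} = α⁻ and ω⁺(∂_t, V⁻) = 0,
and it is the unique vector field on ℝ × M⁰ with these three properties. -/
theorem statement9 (Mp Mn : Set E3) (hMp : IsOpen Mp) (hMn : IsOpen Mn)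
    (ap an Rp Z : E3 → E3) (g : E3 → ℝ)
    (hap : ContDiffOn ℝ (⊤ : ℕ∞) ap Mp) (han : ContDiffOn ℝ (⊤ : ℕ∞) an Mn)
    (hpos : ∀ x ∈ Mp, 0 < contactVol ap x)
    (hneg : ∀ x ∈ Mn, contactVol an x < 0)
    (hpair : ∀ x ∈ Mp ∩ Mn, ∀ u v : E3, oneD an x u v = -oneD ap x u v)
    (hRp : ∀ x ∈ Mp, dot3 (ap x) (Rp x) = 1 ∧ ∀ v : E3, oneD ap x (Rp x) v = 0)
    (hg : ∀ x ∈ Mp ∩ Mn, g x = dot3 (ap x + an x) (Rp x))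
    (hgs : ContDiffOn ℝ (⊤ : ℕ∞) g (Mp ∩ Mn)) (hZs : ContDiffOn ℝ (⊤ : ℕ∞) Z (Mp ∩ Mn))
    (hZ : ∀ x ∈ Mp ∩ Mn,
      dot3 (ap x) (Z x) = 0 ∧ dot3 (an x) (Z x) = 0 ∧
      ∀ v : E3, oneD ap x (Z x) v = dot3 (ap x + an x) v - g x * dot3 (ap x) v) :
    (∀ x : E4, sp x ∈ Mp ∩ Mn → ∀ u v : E4,
      lieD (VmF g Z) (omegaP ap) x u v = -omegaP ap x u v) ∧
    (∀ x : E4, sp x ∈ Mp ∩ Mn → x 0 = 0 → ∀ v : E4, v 0 = 0 →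
      omegaP ap x (VmF g Z x) v = dot3 (an (sp x)) (sp v)) ∧
    (∀ x : E4, sp x ∈ Mp ∩ Mn →
      omegaP ap x (Pi.single 0 1) (VmF g Z x) = 0) ∧
    (∀ W : E4 → E4, ContDiffOn ℝ (⊤ : ℕ∞) W {x : E4 | sp x ∈ Mp ∩ Mn} →
      (∀ x : E4, sp x ∈ Mp ∩ Mn → ∀ u v : E4,
        lieD W (omegaP ap) x u v = -omegaP ap x u v) →
      (∀ x : E4, sp x ∈ Mp ∩ Mn → x 0 = 0 → ∀ v : E4, v 0 = 0 →
        omegaP ap x (W x) v = dot3 (an (sp x)) (sp v)) →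
      (∀ x : E4, sp x ∈ Mp ∩ Mn →
        omegaP ap x (Pi.single 0 1) (W x) = 0) →
      ∀ x : E4, sp x ∈ Mp ∩ Mn → W x = VmF g Z x) := by
  have hMo : IsOpen (Mp ∩ Mn) := hMp.inter hMn
  have part2 : ∀ x : E4, sp x ∈ Mp ∩ Mn → x 0 = 0 → ∀ v : E4, v 0 = 0 →
      omegaP ap x (VmF g Z x) v = dot3 (an (sp x)) (sp v) := by
    intro x hx ht v hv
    rw [omegaP, VmF_zero, sp_VmF, ht, hv]
    simp only [neg_zero, Real.exp_zero, one_smul]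
    rw [(hZ (sp x) hx).2.2 (sp v), dot3_add_left]
    ring
  have part3 : ∀ x : E4, sp x ∈ Mp ∩ Mn →
      omegaP ap x (Pi.single 0 1) (VmF g Z x) = 0 := by
    intro x hx
    rw [omegaP, sp_VmF, sp_single0, oneD_zero_left, dot3_zero_right, dot3_smul_right,
      (hZ (sp x) hx).1]
    simp
  have part1 : ∀ x : E4, sp x ∈ Mp ∩ Mn → ∀ u v : E4,
      lieD (VmF g Z) (omegaP ap) x u v = -omegaP ap x u v := by
    intro x hx u v
    have hxp := hx.1
    have dAp : DifferentiableAt ℝ ap (sp x) := diffA hMp hap hxp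
    have dAn : DifferentiableAt ℝ an (sp x) := diffA hMn han hx.2
    have I1u := keyI1 hMp hMn hap hZs (fun q hq => (hZ q hq).1) hx (sp u)
    have I1v := keyI1 hMp hMn hap hZs (fun q hq => (hZ q hq).1) hx (sp v)
    have I3uv := keyI3 hMp hMn hap han hgs hZs (fun q hq => (hZ q hq).2.2) hx (sp v) (sp u)
    have I3vu := keyI3 hMp hMn hap han hgs hZs (fun q hq => (hZ q hq).2.2) hx (sp u) (sp v)
    have hsym := sndSymm hMp hap hxp
    have S1 : dot3 (fderiv ℝ (fderiv ℝ ap) (sp x) (Z (sp x)) (sp u)) (sp v)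
        = dot3 (fderiv ℝ (fderiv ℝ ap) (sp x) (sp u) (Z (sp x))) (sp v) := by rw [hsym]
    have S2 : dot3 (fderiv ℝ (fderiv ℝ ap) (sp x) (Z (sp x)) (sp v)) (sp u)
        = dot3 (fderiv ℝ (fderiv ℝ ap) (sp x) (sp v) (Z (sp x))) (sp u) := by rw [hsym]
    have S3 : dot3 (fderiv ℝ (fderiv ℝ ap) (sp x) (sp u) (sp v)) (Z (sp x))
        = dot3 (fderiv ℝ (fderiv ℝ ap) (sp x) (sp v) (sp u)) (Z (sp x)) := by rw [hsym]
    have Hp := hpair (sp x) hx (sp u) (sp v)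
    rw [oneD_eq dAp, oneD_eq dAn] at Hp
    rw [lieD, (hasFDerivAt_omega hMp hap hxp u v).fderiv,
      (hasFDerivAt_VmF hMo hgs hZs hx).fderiv, omegaD_apply]
    simp only [omegaP]
    simp only [sp_VmF, VmF_zero, sp_VD, VD_zero]
    simp only [oneD_eq dAp]
    simp only [map_add, map_smul, map_neg, ContinuousLinearMap.add_apply,
      ContinuousLinearMap.smul_apply, ContinuousLinearMap.neg_apply,
      dot3_add_left, dot3_smul_left, dot3_neg_left, dot3_add_right, dot3_smul_right,
      dot3_neg_right, smul_eq_mul]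
    linear_combination (rexp (x 0) * rexp (-(x 0)) * u 0) * I1v
      - (rexp (x 0) * rexp (-(x 0)) * v 0) * I1u
      + (rexp (x 0) * rexp (-(x 0))) * I3uv - (rexp (x 0) * rexp (-(x 0))) * I3vu
      + (rexp (x 0) * rexp (-(x 0))) * Hp
      + (rexp (x 0) * rexp (-(x 0))) * S1 - (rexp (x 0) * rexp (-(x 0))) * S2
      + (rexp (x 0) * rexp (-(x 0))) * S3
  refine ⟨part1, part2, part3, ?_⟩
  intro W hWs hlie hres h3W x hx
  have hdomo : IsOpen {y : E4 | sp y ∈ Mp ∩ Mn} := hMo.preimage sp_cont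
  have dApx : DifferentiableAt ℝ ap (sp x) := diffA hMp hap hx.1
  have key : ∀ v : E4, v 0 = 0 →
      omegaP ap x (W x) v = omegaP ap x (VmF g Z x) v := by
    intro v hv
    set ℓ : ℝ → E4 := fun s => x + (s - x 0) • (Pi.single 0 1 : E4) with hℓ
    have hsp : ∀ s, sp (ℓ s) = sp x := by
      intro s; rw [hℓ]; simp only; rw [sp_add, sp_smul, sp_single0]; simp
    have hl0 : ∀ s, (ℓ s) 0 = s := by
      intro s; simp [hℓ]
    have hlx : ℓ (x 0) = x := by funext j; simp [hℓ]
    have hmem : ∀ s, sp (ℓ s) ∈ Mp ∩ Mn := fun s => by rw [hsp]; exact hx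
    set h : ℝ → ℝ := fun s =>
      omegaP ap (ℓ s) (W (ℓ s)) v - omegaP ap (ℓ s) (VmF g Z (ℓ s)) v with hh
    have hderiv : ∀ s, HasDerivAt h 0 s := by
      intro s
      have hy : sp (ℓ s) ∈ Mp ∩ Mn := hmem s
      have hWd : HasFDerivAt W (fderiv ℝ W (ℓ s)) (ℓ s) :=
        ((hWs.contDiffAt (hdomo.mem_nhds hy)).differentiableAt (by simp)).hasFDerivAt
      have hVd : HasFDerivAt (VmF g Z) (VD g Z (ℓ s)) (ℓ s) := hasFDerivAt_VmF hMo hgs hZs hy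
      have dAy : DifferentiableAt ℝ ap (sp (ℓ s)) := diffA hMp hap hy.1
      have HW := hasFDerivAt_contraction hMp hap hy.1 hWd v
      have HV := hasFDerivAt_contraction hMp hap hy.1 hVd v
      have hlder : HasDerivAt ℓ (Pi.single 0 1 : E4) s := by
        have := (((hasDerivAt_id s).sub_const (x 0)).smul_const (Pi.single 0 1 : E4)).const_add x
        simpa [hℓ] using this
      have hhd := (HW.comp_hasDerivAt s hlder).sub (HV.comp_hasDerivAt s hlder)
      have LW := hlie (ℓ s) hy (Pi.single 0 1) v
      have LV := part1 (ℓ s) hy (Pi.single 0 1) v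
      rw [lieD, (hasFDerivAt_omega hMp hap hy.1 (Pi.single 0 1) v).fderiv] at LW LV
      rw [hVd.fderiv] at LV
      have hKW := hasFDerivAt_contraction hMp hap hy.1 hWd (Pi.single 0 1)
      have hKV := hasFDerivAt_contraction hMp hap hy.1 hVd (Pi.single 0 1)
      have hK0 : (fun t => omegaP ap t (W t) (Pi.single 0 1)
          - omegaP ap t (VmF g Z t) (Pi.single 0 1)) =ᶠ[nhds (ℓ s)] (fun _ => (0 : ℝ)) := by
        filter_upwards [hdomo.mem_nhds hy] with t ht
        rw [omega_antisymm ap t (W t) (Pi.single 0 1),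
          omega_antisymm ap t (VmF g Z t) (Pi.single 0 1), h3W t ht, part3 t ht]
        ring
      have hDK : (omegaD ap (ℓ s) (W (ℓ s)) (Pi.single 0 1)
            + (omegaL ap (ℓ s) (Pi.single 0 1)).comp (fderiv ℝ W (ℓ s)))
          - (omegaD ap (ℓ s) (VmF g Z (ℓ s)) (Pi.single 0 1)
            + (omegaL ap (ℓ s) (Pi.single 0 1)).comp (VD g Z (ℓ s))) = 0 := by
        rw [← (hKW.fun_sub hKV).fderiv, hK0.fderiv_eq]; exact fderiv_const_apply 0
      have KV := ContinuousLinearMap.ext_iff.1 hDK v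
      have CW := domega0 hMp hap hy.1 (W (ℓ s)) (Pi.single 0 1) v
      have CV := domega0 hMp hap hy.1 (VmF g Z (ℓ s)) (Pi.single 0 1) v
      have AS1 := omega_antisymm ap (ℓ s) (fderiv ℝ W (ℓ s) v) (Pi.single 0 1)
      have AS2 := omega_antisymm ap (ℓ s) (VD g Z (ℓ s) v) (Pi.single 0 1)
      have hval : (omegaD ap (ℓ s) (W (ℓ s)) v
            + (omegaL ap (ℓ s) v).comp (fderiv ℝ W (ℓ s))) (Pi.single 0 1)
          - (omegaD ap (ℓ s) (VmF g Z (ℓ s)) v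
            + (omegaL ap (ℓ s) v).comp (VD g Z (ℓ s))) (Pi.single 0 1) = 0 := by
        simp only [ContinuousLinearMap.add_apply, ContinuousLinearMap.sub_apply,
          ContinuousLinearMap.comp_apply, ContinuousLinearMap.zero_apply,
          omegaL_apply dAy] at KV ⊢
        linarith [LW, LV, KV, CW, CV, AS1, AS2]
      rw [hval] at hhd
      exact hhd
    have hconst := is_const_of_deriv_eq_zero (fun s => (hderiv s).differentiableAt)
      (fun s => (hderiv s).deriv)
    have h0 : h 0 = 0 := by
      rw [hh]
      simp only
      rw [hres (ℓ 0) (hmem 0) (hl0 0) v hv, part2 (ℓ 0) (hmem 0) (hl0 0) v hv]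
      ring
    have hx0 : h (x 0) = omegaP ap x (W x) v - omegaP ap x (VmF g Z x) v := by
      rw [hh]; simp only [hlx]
    have := hconst (x 0) 0
    rw [hx0, h0] at this
    linarith [this]
  have keyE0 : omegaP ap x (W x) (Pi.single 0 1) = omegaP ap x (VmF g Z x) (Pi.single 0 1) := by
    rw [omega_antisymm ap x (W x) (Pi.single 0 1),
      omega_antisymm ap x (VmF g Z x) (Pi.single 0 1), h3W x hx, part3 x hx]
  have hall : ∀ v : E4, omegaP ap x (W x) v = omegaP ap x (VmF g Z x) v := by
    intro v
    rw [omega_v_decomp dApx (W x) v, omega_v_decomp dApx (VmF g Z x) v, keyE0,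
      key (lift (sp v)) rfl]
  have hzero : ∀ v, omegaP ap x (W x - VmF g Z x) v = 0 := fun v => by
    rw [omega_u_sub dApx, hall v, sub_self]
  exact sub_eq_zero.mp (nondeg (hpos (sp x) hx.1) dApx _ hzero)
end
end

section
/- Let (α⁺,α⁻) be a contact pair on M, h : M⁺ → ℝ smooth, and let M⁺_h = {(h(p),p)} ⊂ (ℝ × M⁺, ω⁺ = d(e^t α⁺)). Then ∂_t is positively transverse to M⁺_h, and the contraction V⁻ = (g⁺e^{−t}−1)∂_t + e^{−t}Z⁺ is positively transverse to M⁺_h at points over M⁰ if and only if e^{h} < g⁺ − dh(Z⁺) there. When both transversality conditions hold, the induced pair on M⁺_h ≅ M⁺ is α⁺_h = e^h α⁺ and α⁻_h = α⁰ − e^h α⁺. -/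
noncomputable section

/-- The graph embedding x ↦ (h(x), x) of M⁺ into ℝ × M⁺. -/
def emb (h : E3 → ℝ) (x : E3) : E4 := ![h x, x 0, x 1, x 2]

/-- The function F(t,x) = t − h(x), whose zero level set is the graph M⁺_h. -/
noncomputable def Fgraph (h : E3 → ℝ) (y : E4) : ℝ := y 0 - h (sp y)

/-- The lift of a tangent vector v of M to a vector tangent to the graph. -/
noncomputable def tang (h : E3 → ℝ) (x : E3) (v : E3) : E4 :=
  ![fderiv ℝ h x v, v 0, v 1, v 2]

-- aux
lemma dot3_zero_right (a : E3) : dot3 a 0 = 0 := by simp [dot3]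

lemma dot3_smul_right (a : E3) (c : ℝ) (v : E3) : dot3 a (c • v) = c * dot3 a v := by
  unfold dot3
  rw [Finset.mul_sum]
  exact Finset.sum_congr rfl fun i _ => by simp [mul_comm, mul_left_comm]

lemma sp_single0 : sp (Pi.single 0 1 : E4) = 0 := by
  funext i; fin_cases i <;> simp [sp]

lemma sp_lift (z : E3) : sp (lift z) = z := by
  funext i; fin_cases i <;> simp [sp, lift]

lemma sp_emb (h : E3 → ℝ) (x : E3) : sp (emb h x) = x := by
  funext i; fin_cases i <;> simp [sp, emb]

lemma sp_tang (h : E3 → ℝ) (x v : E3) : sp (tang h x v) = v := by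
  funext i; fin_cases i <;> simp [sp, tang]

lemma emb_zero (h : E3 → ℝ) (x : E3) : emb h x 0 = h x := rfl

lemma tang_zero (h : E3 → ℝ) (x v : E3) : tang h x v 0 = fderiv ℝ h x v := rfl

lemma sp_VmF (g : E3 → ℝ) (Z : E3 → E3) (y : E4) :
    sp (VmF g Z y) = Real.exp (-(y 0)) • Z (sp y) := by
  funext i; fin_cases i <;>
    simp [sp, VmF, lift, Pi.single_apply]

lemma VmF_zero (g : E3 → ℝ) (Z : E3 → E3) (y : E4) :
    VmF g Z y 0 = g (sp y) * Real.exp (-(y 0)) - 1 := by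
  simp [VmF, lift, Pi.single_apply]

noncomputable def spL : E4 →L[ℝ] E3 :=
  LinearMap.toContinuousLinearMap
    { toFun := sp
      map_add' := by intro u v; funext i; fin_cases i <;> simp [sp]
      map_smul' := by intro c u; funext i; fin_cases i <;> simp [sp] }

lemma spL_apply (y : E4) : spL y = sp y := rfl

lemma fderiv_Fgraph (h : E3 → ℝ) (x : E3) (hd : DifferentiableAt ℝ h x) (u : E4) :
    fderiv ℝ (Fgraph h) (emb h x) u = u 0 - fderiv ℝ h x (sp u) := by
  have h1 : HasFDerivAt (fun y : E4 => y 0) (ContinuousLinearMap.proj 0 : E4 →L[ℝ] ℝ) (emb h x) :=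
    hasFDerivAt_apply 0 (emb h x)
  have h2 : HasFDerivAt (fun y : E4 => h (sp y)) ((fderiv ℝ h x).comp spL) (emb h x) := by
    have hd' : HasFDerivAt h (fderiv ℝ h x) (spL (emb h x)) := by
      rw [show spL (emb h x) = x from sp_emb h x]; exact hd.hasFDerivAt
    exact hd'.comp (emb h x) spL.hasFDerivAt
  have := (h1.sub h2).fderiv
  rw [show Fgraph h = (fun y : E4 => y 0) - fun y => h (sp y) from rfl, this]
  rfl

lemma diff_dot3 {a : E3 → E3} {x : E3} (ha : DifferentiableAt ℝ a x) (u : E3) :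
    DifferentiableAt ℝ (fun y => dot3 (a y) u) x := by
  unfold dot3
  apply DifferentiableAt.fun_sum
  intro i _
  exact (((ContinuousLinearMap.proj i : E3 →L[ℝ] ℝ).differentiableAt).comp x ha).mul
    (differentiableAt_const _)

lemma oneD_zero_left (a : E3 → E3) (x v : E3) : oneD a x 0 v = 0 := by
  unfold oneD
  rw [show (fun y => dot3 (a y) (0 : E3)) = fun _ : E3 => (0:ℝ) from
    funext fun y => dot3_zero_right (a y)]
  simp

lemma oneD_smul_left (a : E3 → E3) (x : E3) (ha : DifferentiableAt ℝ a x) (c : ℝ) (u v : E3) :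
    oneD a x (c • u) v = c * oneD a x u v := by
  unfold oneD
  rw [show (fun y => dot3 (a y) (c • u)) = fun y => c * dot3 (a y) u from
    funext fun y => dot3_smul_right (a y) c u]
  rw [fderiv_const_mul (diff_dot3 ha u) c, (fderiv ℝ (fun y => dot3 (a y) v) x).map_smul]
  simp [smul_eq_mul]; ring

/-- for a contact pair (α⁺,α⁻) on M and smooth h : M⁺ → ℝ, on the
graph M⁺_h ⊂ (ℝ × M⁺, d(e^tα⁺)): ∂_t is positively transverse to M⁺_h, the
contraction V⁻ = (g⁺e^{−t}−1)∂_t + e^{−t}Z⁺ is positively transverse over M⁰ iff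
e^h < g⁺ − dh(Z⁺), and when both transversality conditions hold the induced pair
is α⁺_h = e^hα⁺, α⁻_h = α⁰ − e^hα⁺. -/
theorem statement10 (Mp Mn : Set E3) (hMp : IsOpen Mp) (hMn : IsOpen Mn)
    (ap an Rp Z : E3 → E3) (g : E3 → ℝ)
    (hap : ContDiffOn ℝ (⊤ : ℕ∞) ap Mp) (han : ContDiffOn ℝ (⊤ : ℕ∞) an Mn)
    (hpos : ∀ x ∈ Mp, 0 < contactVol ap x)
    (hneg : ∀ x ∈ Mn, contactVol an x < 0)
    (hpair : ∀ x ∈ Mp ∩ Mn, ∀ u v : E3, oneD an x u v = -oneD ap x u v)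
    (hRp : ∀ x ∈ Mp, dot3 (ap x) (Rp x) = 1 ∧ ∀ v : E3, oneD ap x (Rp x) v = 0)
    (hg : ∀ x ∈ Mp ∩ Mn, g x = dot3 (ap x + an x) (Rp x))
    (hZ : ∀ x ∈ Mp ∩ Mn,
      dot3 (ap x) (Z x) = 0 ∧ dot3 (an x) (Z x) = 0 ∧
      ∀ v : E3, oneD ap x (Z x) v = dot3 (ap x + an x) v - g x * dot3 (ap x) v)
    (h : E3 → ℝ) (hh : ContDiffOn ℝ (⊤ : ℕ∞) h Mp) :
    (∀ x ∈ Mp, 0 < fderiv ℝ (Fgraph h) (emb h x) (Pi.single 0 1)) ∧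
    (∀ x ∈ Mp ∩ Mn,
      0 < fderiv ℝ (Fgraph h) (emb h x) (VmF g Z (emb h x)) ↔
        Real.exp (h x) < g x - fderiv ℝ h x (Z x)) ∧
    ((∀ x ∈ Mp ∩ Mn, Real.exp (h x) < g x - fderiv ℝ h x (Z x)) →
      (∀ x ∈ Mp, ∀ v : E3,
        omegaP ap (emb h x) (Pi.single 0 1) (tang h x v)
          = Real.exp (h x) * dot3 (ap x) v) ∧
      (∀ x ∈ Mp ∩ Mn, ∀ v : E3,
        omegaP ap (emb h x) (VmF g Z (emb h x)) (tang h x v)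
          = dot3 (ap x + an x) v - Real.exp (h x) * dot3 (ap x) v)) := by
  refine ⟨?_, ?_, ?_⟩
  · intro x hx
    have hd : DifferentiableAt ℝ h x :=
      (hh.contDiffAt (hMp.mem_nhds hx)).differentiableAt (by simp)
    rw [fderiv_Fgraph h x hd, sp_single0]
    simp
  · intro x hx
    have hd : DifferentiableAt ℝ h x :=
      (hh.contDiffAt (hMp.mem_nhds hx.1)).differentiableAt (by simp)
    rw [fderiv_Fgraph h x hd, VmF_zero, sp_VmF, sp_emb, emb_zero,
      (fderiv ℝ h x).map_smul, smul_eq_mul]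
    have hE : Real.exp (h x) * Real.exp (-(h x)) = 1 := by
      rw [← Real.exp_add]; simp
    constructor <;> intro H <;>
      nlinarith [Real.exp_pos (h x), Real.exp_pos (-(h x)), hE]
  · intro _
    constructor
    · intro x hx v
      unfold omegaP
      rw [sp_emb, sp_single0, sp_tang, emb_zero, dot3_zero_right, oneD_zero_left]
      simp
    · intro x hx v
      have hda : DifferentiableAt ℝ ap x :=
        (hap.contDiffAt (hMp.mem_nhds hx.1)).differentiableAt (by simp)
      obtain ⟨hZ1, hZ2, hZ3⟩ := hZ x hx
      unfold omegaP
      rw [sp_VmF, VmF_zero, sp_emb, emb_zero, sp_tang, tang_zero,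
        dot3_smul_right, oneD_smul_left ap x hda, hZ1, hZ3 v]
      have hE : Real.exp (h x) * Real.exp (-(h x)) = 1 := by
        rw [← Real.exp_add]; simp
      linear_combination dot3 (ap x + an x) v * hE
end
end

section
/- On the solid torus with coordinates (r,μ,λ), for constants A, B, C, D with B > 0, C > 0, the pair α⁺ = (1/(B+Ar²))(r² dμ + dλ) and α⁻ = C dμ + D dλ − α⁺ is a well-behaved contact pair: α⁺ is a positive contact form on the whole solid torus with Reeb field R_{α⁺} = A ∂_μ + B ∂_λ, α⁻ is a negative contact form on the complement of the core circle provided AC + BD > 1, and α⁺ + α⁻ = C dμ + D dλ is closed. -/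
/-!
All forms involved are rotation invariant: `α = φ(s) (x dy − y dx) + ψ(s) dλ` with `s = r²`.
Since `ds ∧ (x dy − y dx) = 2s dx ∧ dy`, such a form has
`dα = 2 (sφ)'(s) dx ∧ dy + ψ'(s) ds ∧ dλ` and `α ∧ dα = 2 (ψ (sφ)' − sφ ψ') dx ∧ dy ∧ dλ`.
For `α⁺` (`φ = ψ = 1/(B + As)`) this is `2/(B + As)²`; for `α⁻` it is
`2 (1 − AC − BD)/(B + As)²`; for `α⁰` both `sφ = C` and `ψ = D` are constant, so `dα⁰ = 0`.
The Reeb field annihilates `ds`, which reduces `ι_R dα⁺ = 0` to `A (sφ)' + B ψ' = 0`.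
-/

noncomputable section

/-- α⁺ = (1/(B + Ar²))(r² dμ + dλ); note r²dμ = x dy − y dx is smooth across r=0. -/
noncomputable def aP11 (A B : ℝ) (x : E3) : E3 :=
  (B + A * sq2 x)⁻¹ • ![-(x 1), x 0, 1]

/-- α⁰ = C dμ + D dλ, defined away from the core circle r = 0. -/
noncomputable def a011 (C D : ℝ) (x : E3) : E3 :=
  ![-(x 1) * C / sq2 x, x 0 * C / sq2 x, D]

/-- α⁻ = C dμ + D dλ − α⁺. -/
noncomputable def aM11 (A B C D : ℝ) (x : E3) : E3 := a011 C D x - aP11 A B x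

/-- R = A ∂_μ + B ∂_λ, with ∂_μ = x∂_y − y∂_x. -/
def R11 (A B : ℝ) (x : E3) : E3 := ![-(A * x 1), A * x 0, B]

def rotForm (φ ψ : ℝ → ℝ) (x : E3) : E3 :=
  ![-(x 1) * φ (sq2 x), x 0 * φ (sq2 x), ψ (sq2 x)]

lemma sq2_nonneg (x : E3) : 0 ≤ sq2 x := by
  unfold sq2
  positivity

section rotForm

variable {φ ψ : ℝ → ℝ} {φ' ψ' : ℝ} {x : E3}

lemma dot3_rotForm (v : E3) :
    dot3 (rotForm φ ψ x) v = φ (sq2 x) * (x 0 * v 1 - x 1 * v 0) + ψ (sq2 x) * v 2 := by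
  simp only [dot3, rotForm, Fin.sum_univ_three, Fin.isValue, Matrix.cons_val_zero, Matrix.cons_val_one, Matrix.cons_val_two,
    Matrix.head_cons, Matrix.tail_cons]
  ring

lemma fderiv_dot3_rotForm (hφ : HasDerivAt φ φ' (sq2 x)) (hψ : HasDerivAt ψ ψ' (sq2 x))
    (u v : E3) :
    fderiv ℝ (fun y => dot3 (rotForm φ ψ y) v) x u =
      φ' * (2 * (x 0 * u 0 + x 1 * u 1)) * (x 0 * v 1 - x 1 * v 0)
        + φ (sq2 x) * (u 0 * v 1 - u 1 * v 0)
        + ψ' * (2 * (x 0 * u 0 + x 1 * u 1)) * v 2 := by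
  have h0 : HasFDerivAt (fun y : E3 => y 0) (ContinuousLinearMap.proj (R := ℝ) 0) x :=
    hasFDerivAt_apply 0 x
  have h1 : HasFDerivAt (fun y : E3 => y 1) (ContinuousLinearMap.proj (R := ℝ) 1) x :=
    hasFDerivAt_apply 1 x
  have hs : HasFDerivAt sq2 _ x := (h0.pow 2).add (h1.pow 2)
  have hform := ((hφ.comp_hasFDerivAt x hs).mul
    ((h0.mul_const (v 1)).sub (h1.mul_const (v 0)))).add
      ((hψ.comp_hasFDerivAt x hs).mul_const (v 2))
  rw [(hform.congr_of_eventuallyEq (.of_forall fun y => dot3_rotForm v)).fderiv]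
  simp only [Function.comp_apply, Pi.sub_apply, Nat.add_one_sub_one, pow_one, nsmul_eq_mul,
    Nat.cast_ofNat, smul_add, add_apply, smul_apply, sub_apply, ContinuousLinearMap.proj_apply, smul_eq_mul]
  ring

lemma oneD_rotForm (hφ : HasDerivAt φ φ' (sq2 x)) (hψ : HasDerivAt ψ ψ' (sq2 x)) (u v : E3) :
    oneD (rotForm φ ψ) x u v =
      2 * (φ (sq2 x) + sq2 x * φ') * (u 0 * v 1 - u 1 * v 0)
        + 2 * ψ' * ((x 0 * u 0 + x 1 * u 1) * v 2 - (x 0 * v 0 + x 1 * v 1) * u 2) := by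
  rw [oneD, fderiv_dot3_rotForm hφ hψ, fderiv_dot3_rotForm hφ hψ, sq2]
  ring

lemma contactVol_rotForm (hφ : HasDerivAt φ φ' (sq2 x)) (hψ : HasDerivAt ψ ψ' (sq2 x)) :
    contactVol (rotForm φ ψ) x =
      2 * (ψ (sq2 x) * (φ (sq2 x) + sq2 x * φ') - sq2 x * φ (sq2 x) * ψ') := by
  simp only [contactVol, e3, sq2, dot3_rotForm, oneD_rotForm hφ hψ, Pi.single_eq_same,
    Pi.single_eq_of_ne, ne_eq, Fin.reduceEq, not_false_eq_true, zero_ne_one, one_ne_zero]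
  ring

end rotForm

lemma hasDerivAt_inv_affine {A B s : ℝ} (h : B + A * s ≠ 0) :
    HasDerivAt (fun t => (B + A * t)⁻¹) (-A / (B + A * s) ^ 2) s := by
  simpa using (((hasDerivAt_id s).const_mul A).const_add B).fun_inv h

lemma aP11_eq_rotForm (A B : ℝ) :
    aP11 A B = rotForm (fun s => (B + A * s)⁻¹) (fun s => (B + A * s)⁻¹) := by
  funext x i
  fin_cases i <;>
    simp only [aP11, rotForm, Pi.smul_apply, smul_eq_mul, Fin.zero_eta,
      Fin.mk_one, Fin.reduceFinMk, Matrix.cons_val_zero, Matrix.cons_val_one, Matrix.cons_val] <;>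
    ring

lemma a011_eq_rotForm (C D : ℝ) : a011 C D = rotForm (fun s => C * s⁻¹) (fun _ => D) := by
  funext x i
  fin_cases i <;>
    simp only [a011, rotForm, Fin.zero_eta,
      Fin.mk_one, Fin.reduceFinMk, Matrix.cons_val_zero, Matrix.cons_val_one, Matrix.cons_val] <;>
    ring

lemma aM11_eq_rotForm (A B C D : ℝ) :
    aM11 A B C D =
      rotForm (fun s => C * s⁻¹ - (B + A * s)⁻¹) (fun s => D - (B + A * s)⁻¹) := by
  funext x i
  fin_cases i <;>
    simp only [aM11, a011, aP11, rotForm, Pi.smul_apply, Pi.sub_apply, smul_eq_mul, Fin.zero_eta,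
      Fin.mk_one, Fin.reduceFinMk, Matrix.cons_val_zero, Matrix.cons_val_one, Matrix.cons_val] <;>
    ring

section solidTorus

variable {A B C D : ℝ} {x : E3}

lemma contactVol_aP11 (h : B + A * sq2 x ≠ 0) :
    contactVol (aP11 A B) x = 2 / (B + A * sq2 x) ^ 2 := by
  rw [aP11_eq_rotForm, contactVol_rotForm (hasDerivAt_inv_affine h) (hasDerivAt_inv_affine h)]
  field_simp
  ring

lemma dot3_aP11_R11 (h : B + A * sq2 x ≠ 0) : dot3 (aP11 A B x) (R11 A B x) = 1 := by
  rw [aP11_eq_rotForm, dot3_rotForm]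
  simp only [R11, Matrix.cons_val_zero, Matrix.cons_val_one, Matrix.cons_val_two,
    Matrix.head_cons, Matrix.tail_cons]
  field_simp
  simp only [sq2]
  ring

lemma oneD_aP11_R11 (h : B + A * sq2 x ≠ 0) (v : E3) : oneD (aP11 A B) x (R11 A B x) v = 0 := by
  rw [aP11_eq_rotForm, oneD_rotForm (hasDerivAt_inv_affine h) (hasDerivAt_inv_affine h)]
  simp only [R11, Matrix.cons_val_zero, Matrix.cons_val_one, Matrix.cons_val_two,
    Matrix.head_cons, Matrix.tail_cons]
  field_simp
  ring

lemma oneD_a011 (hs : sq2 x ≠ 0) (u v : E3) : oneD (a011 C D) x u v = 0 := by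
  rw [a011_eq_rotForm, oneD_rotForm ((hasDerivAt_inv hs).const_mul C) (hasDerivAt_const _ D)]
  field_simp
  ring

lemma contactVol_aM11 (hs : sq2 x ≠ 0) (h : B + A * sq2 x ≠ 0) :
    contactVol (aM11 A B C D) x = 2 * (1 - (A * C + B * D)) / (B + A * sq2 x) ^ 2 := by
  rw [aM11_eq_rotForm, contactVol_rotForm
    (((hasDerivAt_inv hs).const_mul C).fun_sub (hasDerivAt_inv_affine h))
    ((hasDerivAt_const _ D).fun_sub (hasDerivAt_inv_affine h))]
  field_simp
  ring

end solidTorus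

theorem statement11_general (A B C D : ℝ)
    (hdef : ∀ s : ℝ, 0 ≤ s → s ≤ 1 → 0 < B + A * s) :
    (∀ x : E3, sq2 x ≤ 1 → 0 < contactVol (aP11 A B) x) ∧
    (∀ x : E3, sq2 x ≤ 1 →
      dot3 (aP11 A B x) (R11 A B x) = 1 ∧
      ∀ v : E3, oneD (aP11 A B) x (R11 A B x) v = 0) ∧
    (1 < A * C + B * D →
      ∀ x : E3, sq2 x ≤ 1 → 0 < sq2 x → contactVol (aM11 A B C D) x < 0) ∧
    (∀ x : E3, 0 < sq2 x → ∀ u v : E3, oneD (a011 C D) x u v = 0) := by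
  have hg : ∀ x : E3, sq2 x ≤ 1 → 0 < B + A * sq2 x := fun x hx => hdef _ (sq2_nonneg x) hx
  refine ⟨fun x hx => ?_, fun x hx => ⟨dot3_aP11_R11 (hg x hx).ne', oneD_aP11_R11 (hg x hx).ne'⟩,
    fun hAC x hx hs => ?_, fun x hs => oneD_a011 hs.ne'⟩
  · rw [contactVol_aP11 (hg x hx).ne']
    have := hg x hx
    positivity
  · rw [contactVol_aM11 hs.ne' (hg x hx).ne']
    have := hg x hx
    exact div_neg_of_neg_of_pos (by linarith) (by positivity)

/-- for B > 0, C > 0 (and B + Ar² > 0 so that α⁺ is defined on the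
solid torus), the pair α⁺ = (1/(B+Ar²))(r²dμ + dλ), α⁻ = Cdμ + Ddλ − α⁺ is a
well-behaved contact pair: α⁺ is a positive contact form on the whole solid torus
with Reeb field A∂_μ + B∂_λ; α⁻ is a negative contact form off the core circle
provided AC + BD > 1; and α⁺ + α⁻ = Cdμ + Ddλ is closed. -/
theorem statement11 (A B C D : ℝ) (hB : 0 < B) (hC : 0 < C)
    (hdef : ∀ s : ℝ, 0 ≤ s → s ≤ 1 → 0 < B + A * s) :
    (∀ x : E3, sq2 x ≤ 1 → 0 < contactVol (aP11 A B) x) ∧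
    (∀ x : E3, sq2 x ≤ 1 →
      dot3 (aP11 A B x) (R11 A B x) = 1 ∧
      ∀ v : E3, oneD (aP11 A B) x (R11 A B x) v = 0) ∧
    (1 < A * C + B * D →
      ∀ x : E3, sq2 x ≤ 1 → 0 < sq2 x → contactVol (aM11 A B C D) x < 0) ∧
    (∀ x : E3, 0 < sq2 x → ∀ u v : E3, oneD (a011 C D) x u v = 0) :=
  statement11_general A B C D hdef
end
end
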